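/- arXiv:1204.0088 — 5 statements merged into one kernel-verified Lean document; each statement's English description precedes it below -/
import Mathlib

section
/- Let v_1,…,v_d be a unimodular sequence in ℤ² with ε_i = det(v_i,v_{i+1}) and integers a_i defined by ε_{i-1}v_{i-1} + ε_i v_{i+1} + a_i v_i = 0. If v_j has maximal Euclidean norm among v_1,…,v_d, then a_j ∈ {-1, 0, 1}. -/
/-- The determinant of two vectors in `ℤ²`. -/
def det (p q : ℤ × ℤ) : ℤ := p.1 * q.2 - p.2 * q.1

/-- The square of the Euclidean norm of a vector in `ℤ²`. -/
def normSq (p : ℤ × ℤ) : ℤ := p.1 ^ 2 + p.2 ^ 2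

set_option maxHeartbeats 1000000 in
/-- if `v_j` has maximal Euclidean norm among the vectors of a
unimodular sequence, then `a_j ∈ {-1, 0, 1}`. -/
theorem stmt1 (d : ℕ) (hd : 2 ≤ d) [NeZero d] (v : ZMod d → ℤ × ℤ)
    (hu : ∀ i, det (v i) (v (i + 1)) = 1 ∨ det (v i) (v (i + 1)) = -1)
    (j : ZMod d) (hmax : ∀ i, normSq (v i) ≤ normSq (v j))
    (a : ℤ)
    (ha : det (v (j - 1)) (v j) • v (j - 1) + det (v j) (v (j + 1)) • v (j + 1)
            + a • v j = 0) :
    a = -1 ∨ a = 0 ∨ a = 1 := by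
  by_contra hcon
  push_neg at hcon
  obtain ⟨h1, h2, h3⟩ := hcon
  have ha4 : 4 ≤ a ^ 2 := by
    have h : a ≤ -2 ∨ 2 ≤ a := by omega
    rcases h with h | h <;> nlinarith
  have hje : j - 1 + 1 = j := by ring
  have he : det (v (j - 1)) (v j) = 1 ∨ det (v (j - 1)) (v j) = -1 := by
    have := hu (j - 1); rwa [hje] at this
  have hf : det (v j) (v (j + 1)) = 1 ∨ det (v j) (v (j + 1)) = -1 := hu j
  have hP := hmax (j - 1)
  have hR := hmax (j + 1)
  obtain ⟨p1, p2, hvp⟩ : ∃ x y, v (j - 1) = (x, y) := ⟨_, _, rfl⟩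
  obtain ⟨q1, q2, hvq⟩ : ∃ x y, v j = (x, y) := ⟨_, _, rfl⟩
  obtain ⟨r1, r2, hvr⟩ : ∃ x y, v (j + 1) = (x, y) := ⟨_, _, rfl⟩
  simp only [hvp, hvq, hvr] at he hf hP hR ha
  simp only [det, normSq] at he hf hP hR ha
  set E : ℤ := p1 * q2 - p2 * q1 with hE
  set F : ℤ := q1 * r2 - q2 * r1 with hF
  have he2 : E ^ 2 = 1 := by rcases he with h | h <;> rw [h] <;> ring
  have hf2 : F ^ 2 = 1 := by rcases hf with h | h <;> rw [h] <;> ring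
  have eq1 : E * p1 + F * r1 + a * q1 = 0 := by
    have := congrArg Prod.fst ha
    simpa [Prod.smul_def] using this
  have eq2 : E * p2 + F * r2 + a * q2 = 0 := by
    have := congrArg Prod.snd ha
    simpa [Prod.smul_def] using this
  have hQpos : 1 ≤ q1 ^ 2 + q2 ^ 2 := by
    rcases he with h | h <;>
      nlinarith [sq_nonneg q1, sq_nonneg q2, sq_nonneg (p1 + q2), sq_nonneg (p1 - q2),
        sq_nonneg (p2 + q1), sq_nonneg (p2 - q1)]
  have key : a ^ 2 * (q1 ^ 2 + q2 ^ 2)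
      = p1 ^ 2 + p2 ^ 2 + (r1 ^ 2 + r2 ^ 2) + 2 * E * F * (p1 * r1 + p2 * r2) := by
    linear_combination (a * q1 - E * p1 - F * r1) * eq1 + (a * q2 - E * p2 - F * r2) * eq2
      + (p1 ^ 2 + p2 ^ 2) * he2 + (r1 ^ 2 + r2 ^ 2) * hf2
  have detPR : p1 * r2 - p2 * r1 = -(a * E * F) := by
    linear_combination E * r2 * eq1 - E * r1 * eq2 - (p1 * r2 - p2 * r1) * he2
  have lag : (p1 * r1 + p2 * r2) ^ 2 + (p1 * r2 - p2 * r1) ^ 2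
      = (p1 ^ 2 + p2 ^ 2) * (r1 ^ 2 + r2 ^ 2) := by ring
  -- from key: 2*E*F*(p1*r1+p2*r2) = a^2*Nq - Np - Nr ≥ 2*Nq
  have step : 2 * (q1 ^ 2 + q2 ^ 2) ≤ 2 * E * F * (p1 * r1 + p2 * r2) := by nlinarith
  have hD : (p1 * r2 - p2 * r1) ^ 2 = a ^ 2 := by
    rw [detPR]; linear_combination a ^ 2 * E ^ 2 * hf2 + a ^ 2 * he2
  have sq4 : (2 * E * F * (p1 * r1 + p2 * r2)) ^ 2
      = 4 * ((p1 ^ 2 + p2 ^ 2) * (r1 ^ 2 + r2 ^ 2)) - 4 * a ^ 2 := by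
    linear_combination 4 * (p1 * r1 + p2 * r2) ^ 2 * F ^ 2 * he2
      + 4 * (p1 * r1 + p2 * r2) ^ 2 * hf2 + 4 * lag - 4 * hD
  have hS2 : (2 * (q1 ^ 2 + q2 ^ 2)) ^ 2 ≤ (2 * E * F * (p1 * r1 + p2 * r2)) ^ 2 :=
    pow_le_pow_left₀ (by positivity) step 2
  have hNN : (p1 ^ 2 + p2 ^ 2) * (r1 ^ 2 + r2 ^ 2) ≤ (q1 ^ 2 + q2 ^ 2) * (q1 ^ 2 + q2 ^ 2) :=
    mul_le_mul hP hR (by positivity) (by positivity)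
  nlinarith [hS2, sq4, hNN, ha4]
end

section
/- Let v_1,…,v_d be a unimodular sequence in ℤ² with a_j = 0, and let v'_1,…,v'_{d-2} be the unimodular sequence obtained by deleting v_{j-1} and v_j, with corresponding ε'_i and a'_i. Then (Σ_{i=1}^d a_i + 3Σ_{i=1}^d ε_i) − (Σ_{i=1}^{d-2} a'_i + 3Σ_{i=1}^{d-2} ε'_i) = 3(ε_{j-2} + ε_{j-1} + ε_j + ε_{j-2}ε_{j-1}ε_j), which equals 12 if ε_{j-2} = ε_{j-1} = ε_j = 1, equals −12 if ε_{j-2} = ε_{j-1} = ε_j = −1, and equals 0 otherwise. -/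
lemma det_smul_right (c : ℤ) (x y : ℤ × ℤ) : det x (c • y) = c * det x y := by
  simp [det, Prod.smul_def, smul_eq_mul]; ring

lemma bformula (w : ℤ → ℤ × ℤ) (e b : ℤ → ℤ)
    (he : ∀ i, e i = det (w i) (w (i+1)))
    (hb : ∀ i, e (i-1) • w (i-1) + e i • w (i+1) + b i • w i = 0)
    (i : ℤ) (h1 : e i * e i = 1) :
    b i = -(e (i-1) * e i) * det (w (i-1)) (w (i+1)) := by
  have c1 := congrArg Prod.fst (hb i)
  have c2 := congrArg Prod.snd (hb i)
  simp only [Prod.fst_add, Prod.snd_add, Prod.smul_fst, Prod.smul_snd, smul_eq_mul,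
    Prod.fst_zero, Prod.snd_zero] at c1 c2
  have key : b i * e i = -(e (i-1)) * det (w (i-1)) (w (i+1)) := by
    have hei : e i = (w i).1 * (w (i+1)).2 - (w i).2 * (w (i+1)).1 := he i
    simp only [det]
    linear_combination (w (i+1)).2 * c1 - (w (i+1)).1 * c2 + (b i) * hei
  calc b i = b i * (e i * e i) := by rw [h1]; ring
    _ = (b i * e i) * e i := by ring
    _ = -(e (i-1) * e i) * det (w (i-1)) (w (i+1)) := by rw [key]; ring

lemma sumIoc_split (f : ℤ → ℤ) {a b c : ℤ} (h1 : a ≤ b) (h2 : b ≤ c) :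
    ∑ i ∈ Finset.Ioc a c, f i = ∑ i ∈ Finset.Ioc a b, f i + ∑ i ∈ Finset.Ioc b c, f i := by
  rw [← Finset.Ioc_union_Ioc_eq_Ioc h1 h2, Finset.sum_union]
  rw [Finset.disjoint_left]
  intro x hx hx'
  simp only [Finset.mem_Ioc] at hx hx'
  omega

lemma Icc1 (n : ℤ) : Finset.Icc (1:ℤ) n = Finset.Ioc 0 n := by
  ext x; simp; omega

lemma sumIoc_single (f : ℤ → ℤ) (a : ℤ) : ∑ i ∈ Finset.Ioc (a-1) a, f i = f a := by
  have : Finset.Ioc (a-1) a = {a} := by ext x; simp; omega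
  rw [this, Finset.sum_singleton]

lemma sumIoc_shift (f : ℤ → ℤ) (a b : ℤ) :
    ∑ i ∈ Finset.Ioc a b, f (i + 2) = ∑ i ∈ Finset.Ioc (a+2) (b+2), f i := by
  rw [← Finset.map_add_right_Ioc, Finset.sum_map]
  rfl

lemma QKcore (e2 e1 e0 ep aP aJ1 : ℤ) (w2 w0 w1 wpp : ℤ × ℤ)
    (h2 : e2*e2 = 1) (h1 : e1*e1 = 1) (h0 : e0*e0 = 1) (hp : ep*ep = 1)
    (hrel : e0 • w0 + ep • wpp + (aP * -(e1*e0)) • w1 = 0)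
    (haj1 : aJ1 = -(e2*e1) * det w2 w0)
    (he2 : e2 = det w2 w1) :
    -(-(e2*e1*e0) * ep) * det w2 wpp = aJ1 + aP := by
  have c1 := congrArg Prod.fst hrel
  have c2 := congrArg Prod.snd hrel
  simp only [Prod.fst_add, Prod.snd_add, Prod.smul_fst, Prod.smul_snd, smul_eq_mul,
    Prod.fst_zero, Prod.snd_zero] at c1 c2
  simp only [det] at haj1 he2 ⊢
  linear_combination (e2*e1*e0*(w2.1))*c2 - (e2*e1*e0*(w2.2))*c1
    + (-(e2*e1*((w2.1)*(w0.2)-(w2.2)*(w0.1))) + aP*e1*e1)*h0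
    + (aP*e1*e1*e0*e0)*h2 + aP*h1 - haj1
    + (-(aP*e2*e1*e1*e0*e0))*he2

lemma Qj2core (e3 e2 e1 e0 D : ℤ) (h1 : e1*e1=1) (h0 : e0*e0=1) :
    -(e3 * -(e2*e1*e0)) * (-(e1*e0) * D) = -(e3*e2)*D := by
  linear_combination (-(e3*e2*D*e1*e1))*h0 + (-(e3*e2*D))*h1

/-- with `a_j = 0`, deleting `v_{j-1}` and `v_j` from a unimodular
sequence `v_1, …, v_d` (indexed cyclically, encoded here as `d`-periodic functions
on `ℤ`) yields a unimodular sequence `v'_1, …, v'_{d-2}` and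
`(Σ a_i + 3 Σ ε_i) − (Σ a'_i + 3 Σ ε'_i) = 3(ε_{j-2} + ε_{j-1} + ε_j + ε_{j-2}ε_{j-1}ε_j)`,
which is `12` if `ε_{j-2} = ε_{j-1} = ε_j = 1`, is `-12` if they are all `-1`,
and is `0` otherwise. -/
theorem stmt5 (d : ℕ) (hd : 4 ≤ d) (j : ℤ) (hj1 : 3 ≤ j) (hj2 : j ≤ d)
    (v : ℤ → ℤ × ℤ) (hvper : ∀ i, v (i + d) = v i)
    (ε a : ℤ → ℤ)
    (hε : ∀ i, ε i = det (v i) (v (i + 1)))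
    (hu : ∀ i, ε i = 1 ∨ ε i = -1)
    (ha : ∀ i, ε (i - 1) • v (i - 1) + ε i • v (i + 1) + a i • v i = 0)
    (haj : a j = 0)
    (v' : ℤ → ℤ × ℤ) (hv'per : ∀ i, v' (i + ((d : ℤ) - 2)) = v' i)
    (hv'1 : ∀ i, 1 ≤ i → i ≤ j - 2 → v' i = v i)
    (hv'2 : ∀ i, j - 1 ≤ i → i ≤ (d : ℤ) - 2 → v' i = v (i + 2))
    (ε' a' : ℤ → ℤ)
    (hε' : ∀ i, ε' i = det (v' i) (v' (i + 1)))
    (ha' : ∀ i, ε' (i - 1) • v' (i - 1) + ε' i • v' (i + 1) + a' i • v' i = 0) :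
    ((∑ i ∈ Finset.Icc (1 : ℤ) d, a i + 3 * ∑ i ∈ Finset.Icc (1 : ℤ) d, ε i)
        - (∑ i ∈ Finset.Icc (1 : ℤ) ((d : ℤ) - 2), a' i
            + 3 * ∑ i ∈ Finset.Icc (1 : ℤ) ((d : ℤ) - 2), ε' i)
      = 3 * (ε (j - 2) + ε (j - 1) + ε j + ε (j - 2) * ε (j - 1) * ε j)) ∧
    (ε (j - 2) = 1 ∧ ε (j - 1) = 1 ∧ ε j = 1 →
      3 * (ε (j - 2) + ε (j - 1) + ε j + ε (j - 2) * ε (j - 1) * ε j) = 12) ∧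
    (ε (j - 2) = -1 ∧ ε (j - 1) = -1 ∧ ε j = -1 →
      3 * (ε (j - 2) + ε (j - 1) + ε j + ε (j - 2) * ε (j - 1) * ε j) = -12) ∧
    (¬(ε (j - 2) = 1 ∧ ε (j - 1) = 1 ∧ ε j = 1) →
      ¬(ε (j - 2) = -1 ∧ ε (j - 1) = -1 ∧ ε j = -1) →
      3 * (ε (j - 2) + ε (j - 1) + ε j + ε (j - 2) * ε (j - 1) * ε j) = 0) := by
  have hd4 : (4:ℤ) ≤ (d:ℤ) := by exact_mod_cast hd
  -- squares
  have εsq : ∀ i, ε i * ε i = 1 := fun i => by rcases hu i with h | h <;> rw [h] <;> norm_num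
  have aform : ∀ i, a i = -(ε (i-1) * ε i) * det (v (i-1)) (v (i+1)) :=
    fun i => bformula v ε a hε ha i (εsq i)
  -- periodicity instances for v and ε
  have hvd : v (d:ℤ) = v 0 := by have := hvper 0; rwa [zero_add] at this
  have hvd1 : v ((d:ℤ)+1) = v 1 := by have := hvper 1; rwa [add_comm] at this
  have hvd2 : v ((d:ℤ)+2) = v 2 := by have := hvper 2; rwa [add_comm] at this
  have εd : ε (d:ℤ) = ε 0 := by rw [hε (d:ℤ), hε 0, hvd, hvd1, zero_add]
  have εd1 : ε ((d:ℤ)+1) = ε 1 := by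
    rw [hε ((d:ℤ)+1), hε 1, hvd1, show (d:ℤ)+1+1 = (d:ℤ)+2 from by ring, hvd2]
    norm_num
  -- the key collapsing relation from a j = 0
  have key : v (j+1) = (-(ε (j-1) * ε j)) • v (j-1) := by
    have h := ha j
    rw [haj, zero_smul, add_zero] at h
    have h2 : ε j • v (j+1) = -(ε (j-1) • v (j-1)) := eq_neg_of_add_eq_zero_right h
    calc v (j+1) = (ε j * ε j) • v (j+1) := by rw [εsq j, one_smul]
      _ = ε j • (ε j • v (j+1)) := by rw [smul_smul]
      _ = ε j • (-(ε (j-1) • v (j-1))) := by rw [h2]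
      _ = (-(ε (j-1) * ε j)) • v (j-1) := by rw [smul_neg, smul_smul]; rw [← neg_smul]; ring_nf
  -- v' extended values
  have hv'top : v' ((d:ℤ)-1) = v 1 := by
    have h := hv'per 1
    rw [show (1:ℤ) + ((d:ℤ)-2) = (d:ℤ)-1 from by ring] at h
    rw [h]; exact hv'1 1 le_rfl (by omega)
  have hv'0 : v' 0 = v' ((d:ℤ)-2) := by
    have := hv'per 0; rw [zero_add] at this; exact this.symm
  have hv'd1 : v' ((d:ℤ)-1) = v' 1 := by
    have h := hv'per 1
    rwa [show (1:ℤ) + ((d:ℤ)-2) = (d:ℤ)-1 from by ring] at h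
  have hv'jm1 : v' (j-1) = v (j+1) := by
    by_cases hjd : j = (d:ℤ)
    · rw [show j - 1 = (d:ℤ)-1 from by omega, hv'top, ← hvd1, show (d:ℤ)+1 = j+1 from by omega]
    · rw [hv'2 (j-1) le_rfl (by omega), show j-1+2 = j+1 from by ring]
  -- ε' values
  have P1 : ∀ i, 1 ≤ i → i ≤ j-3 → ε' i = ε i := by
    intro i h1 h2
    rw [hε' i, hv'1 i h1 (by omega), hv'1 (i+1) (by omega) (by omega), ← hε i]
  have e2det : ε (j-2) = det (v (j-2)) (v (j-1)) := by
    rw [hε (j-2), show j-2+1 = j-1 from by ring]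
  have P2 : ε' (j-2) = -(ε (j-2) * ε (j-1) * ε j) := by
    rw [hε' (j-2), show j-2+1 = j-1 from by ring, hv'1 (j-2) (by omega) (by omega),
      hv'jm1, key, det_smul_right, ← e2det]
    ring
  have P3 : ∀ i, j-1 ≤ i → i ≤ (d:ℤ)-2 → ε' i = ε (i+2) := by
    intro i h1 h2
    have hnext : v' (i+1) = v (i+3) := by
      rcases eq_or_lt_of_le h2 with heq | hlt
      · rw [show i+1 = (d:ℤ)-1 from by omega, hv'top, ← hvd1, show (d:ℤ)+1 = i+3 from by omega]
      · rw [hv'2 (i+1) (by omega) (by omega), show i+1+2 = i+3 from by ring]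
    rw [hε' i, hv'2 i h1 h2, hnext, hε (i+2), show i+2+1 = i+3 from by ring]
  have ε'sq : ∀ i, 1 ≤ i → i ≤ (d:ℤ)-2 → ε' i * ε' i = 1 := by
    intro i h1 h2
    rcases lt_trichotomy i (j-2) with h | h | h
    · rw [P1 i h1 (by omega)]; exact εsq i
    · rw [h, P2]
      rcases hu (j-2) with h2|h2 <;> rcases hu (j-1) with h1'|h1' <;> rcases hu j with h0|h0 <;>
        rw [h2, h1', h0] <;> norm_num
    · rw [P3 i (by omega) h2]; exact εsq (i+2)
  have ε'0eq : ε' 0 = ε' ((d:ℤ)-2) := by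
    rw [hε' 0, hε' ((d:ℤ)-2), hv'0, zero_add, show (d:ℤ)-2+1 = (d:ℤ)-1 from by ring, hv'd1]
  have a'form : ∀ i, 1 ≤ i → i ≤ (d:ℤ)-2 →
      a' i = -(ε' (i-1) * ε' i) * det (v' (i-1)) (v' (i+1)) :=
    fun i h1 h2 => bformula v' ε' a' hε' ha' i (ε'sq i h1 h2)
  -- extended boundary values (valid when j ≤ d-1)
  have hbd : j ≤ (d:ℤ)-1 → (v' 0 = v 0 ∧ ε' 0 = ε 0) := by
    intro hjd
    have h1 : v' ((d:ℤ)-2) = v (d:ℤ) := by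
      rw [hv'2 ((d:ℤ)-2) (by omega) le_rfl, show (d:ℤ)-2+2 = (d:ℤ) from by ring]
    constructor
    · rw [hv'0, h1, hvd]
    · rw [ε'0eq, P3 ((d:ℤ)-2) (by omega) le_rfl, show (d:ℤ)-2+2 = (d:ℤ) from by ring, εd]
  have aper : a ((d:ℤ)+1) = a 1 := by
    rw [aform ((d:ℤ)+1), aform 1, show (d:ℤ)+1-1 = (d:ℤ) from by ring,
      show (d:ℤ)+1+1 = (d:ℤ)+2 from by ring, εd, εd1, hvd, hvd2,
      show (1:ℤ)-1 = 0 from by ring, show (1:ℤ)+1 = 2 from by ring]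
  -- a' pointwise values
  have Qmid : ∀ i, 2 ≤ i → i ≤ j-3 → a' i = a i := by
    intro i h1 h2
    rw [a'form i (by omega) (by omega), P1 (i-1) (by omega) (by omega), P1 i (by omega) h2,
      hv'1 (i-1) (by omega) (by omega), hv'1 (i+1) (by omega) (by omega), ← aform i]
  have Q1 : j ≤ (d:ℤ)-1 → 4 ≤ j → a' 1 = a 1 := by
    intro hjd hj4
    obtain ⟨hb1, hb2⟩ := hbd hjd
    rw [a'form 1 le_rfl (by omega), show (1:ℤ)-1 = 0 from by ring,
      show (1:ℤ)+1 = 2 from by ring, hb1, hb2, P1 1 le_rfl (by omega),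
      hv'1 2 (by omega) (by omega), aform 1, show (1:ℤ)-1 = 0 from by ring,
      show (1:ℤ)+1 = 2 from by ring]
  have Qj3 : v' (j-3) = v (j-3) ∧ ε' (j-3) = ε (j-3) := by
    by_cases hj4 : 4 ≤ j
    · exact ⟨hv'1 (j-3) (by omega) (by omega), P1 (j-3) (by omega) le_rfl⟩
    · have hj3 : j = 3 := by omega
      obtain ⟨hb1, hb2⟩ := hbd (by omega)
      rw [show j-3 = (0:ℤ) from by omega]
      exact ⟨hb1, hb2⟩
  have Qj2 : a' (j-2) = a (j-2) := by
    obtain ⟨hb1, hb2⟩ := Qj3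
    rw [a'form (j-2) (by omega) (by omega), show j-2-1 = j-3 from by ring,
      show j-2+1 = j-1 from by ring, hb1, hb2, P2, hv'jm1, key, det_smul_right,
      aform (j-2), show j-2-1 = j-3 from by ring, show j-2+1 = j-1 from by ring]
    exact Qj2core (ε (j-3)) (ε (j-2)) (ε (j-1)) (ε j) (det (v (j-3)) (v (j-1)))
      (εsq (j-1)) (εsq j)
  have Qhigh : ∀ i, j ≤ i → i ≤ (d:ℤ)-2 → a' i = a (i+2) := by
    intro i h1 h2
    have hnext : v' (i+1) = v (i+3) := by
      rcases eq_or_lt_of_le h2 with heq | hlt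
      · rw [show i+1 = (d:ℤ)-1 from by omega, hv'top, ← hvd1, show (d:ℤ)+1 = i+3 from by omega]
      · rw [hv'2 (i+1) (by omega) (by omega), show i+1+2 = i+3 from by ring]
    rw [a'form i (by omega) h2, P3 (i-1) (by omega) (by omega), P3 i (by omega) h2,
      show i-1+2 = i+1 from by ring, hv'2 (i-1) (by omega) (by omega),
      show i-1+2 = i+1 from by ring, hnext, aform (i+2), show i+2-1 = i+1 from by ring,
      show i+2+1 = i+3 from by ring]
  -- the special index
  have QK2 : j ≤ (d:ℤ)-1 → a' (j-1) = a (j-1) + a (j+1) := by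
    intro hjd
    have hv'j : v' j = v (j+2) := by
      rcases eq_or_lt_of_le hjd with heq | hlt
      · rw [show j = (d:ℤ)-1 from heq, hv'top, ← hvd1, show (d:ℤ)+1 = (d:ℤ)-1+2 from by ring]
      · rw [hv'2 j (by omega) (by omega)]
    have hrel := ha (j+1)
    rw [show j+1-1 = j from by ring, show j+1+1 = j+2 from by ring, key, smul_smul] at hrel
    rw [a'form (j-1) (by omega) (by omega), show j-1-1 = j-2 from by ring,
      show j-1+1 = j from by ring, P2, P3 (j-1) le_rfl (by omega),
      show j-1+2 = j+1 from by ring, hv'1 (j-2) (by omega) (by omega), hv'j]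
    have haj1 : a (j-1) = -(ε (j-2) * ε (j-1)) * det (v (j-2)) (v j) := by
      rw [aform (j-1), show j-1-1 = j-2 from by ring, show j-1+1 = j from by ring]
    exact QKcore (ε (j-2)) (ε (j-1)) (ε j) (ε (j+1)) (a (j+1)) (a (j-1))
      (v (j-2)) (v j) (v (j-1)) (v (j+2)) (εsq (j-2)) (εsq (j-1)) (εsq j) (εsq (j+1))
      hrel haj1 e2det
  have QK1 : j = (d:ℤ) → a' 1 = a ((d:ℤ)-1) + a 1 := by
    intro hjd
    have he'0 : ε' 0 = -(ε (j-2) * ε (j-1) * ε j) := by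
      rw [ε'0eq, show (d:ℤ)-2 = j-2 from by omega, P2]
    have hv'0' : v' 0 = v (j-2) := by
      rw [hv'0, show (d:ℤ)-2 = j-2 from by omega, hv'1 (j-2) (by omega) (by omega)]
    have hv'2' : v' 2 = v (j+2) := by
      rw [hv'1 2 (by omega) (by omega), ← hvd2, show (d:ℤ)+2 = j+2 from by omega]
    have he'1 : ε' 1 = ε (j+1) := by
      rw [P1 1 le_rfl (by omega), ← εd1, show (d:ℤ)+1 = j+1 from by omega]
    have hrel := ha (j+1)
    rw [show j+1-1 = j from by ring, show j+1+1 = j+2 from by ring, key, smul_smul] at hrel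
    rw [a'form 1 le_rfl (by omega), show (1:ℤ)-1 = 0 from by ring,
      show (1:ℤ)+1 = 2 from by ring, he'0, he'1, hv'0', hv'2']
    have haj1 : a (j-1) = -(ε (j-2) * ε (j-1)) * det (v (j-2)) (v j) := by
      rw [aform (j-1), show j-1-1 = j-2 from by ring, show j-1+1 = j from by ring]
    have := QKcore (ε (j-2)) (ε (j-1)) (ε j) (ε (j+1)) (a (j+1)) (a (j-1))
      (v (j-2)) (v j) (v (j-1)) (v (j+2)) (εsq (j-2)) (εsq (j-1)) (εsq j) (εsq (j+1))
      hrel haj1 e2det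
    rw [this, show j-1 = (d:ℤ)-1 from by omega, show j+1 = (d:ℤ)+1 from by omega, aper]
  -- sum of ε'
  have hSe : ∑ i ∈ Finset.Icc (1:ℤ) ((d:ℤ)-2), ε' i
      = ∑ i ∈ Finset.Icc (1:ℤ) (d:ℤ), ε i
        - (ε (j-2) + ε (j-1) + ε j + ε (j-2)*ε (j-1)*ε j) := by
    rw [Icc1, Icc1]
    rw [sumIoc_split ε' (show (0:ℤ) ≤ j-2 from by omega) (show j-2 ≤ (d:ℤ)-2 from by omega),
        sumIoc_split ε' (show (0:ℤ) ≤ j-3 from by omega) (show j-3 ≤ j-2 from by omega)]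
    rw [sumIoc_split ε (show (0:ℤ) ≤ j from by omega) (show j ≤ (d:ℤ) from by omega),
        sumIoc_split ε (show (0:ℤ) ≤ j-1 from by omega) (show j-1 ≤ j from by omega),
        sumIoc_split ε (show (0:ℤ) ≤ j-2 from by omega) (show j-2 ≤ j-1 from by omega),
        sumIoc_split ε (show (0:ℤ) ≤ j-3 from by omega) (show j-3 ≤ j-2 from by omega)]
    have sing1 : ∑ i ∈ Finset.Ioc (j-3) (j-2), ε' i = ε' (j-2) := by
      have := sumIoc_single ε' (j-2); rwa [show j-2-1 = j-3 from by ring] at this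
    have sing2 : ∑ i ∈ Finset.Ioc (j-3) (j-2), ε i = ε (j-2) := by
      have := sumIoc_single ε (j-2); rwa [show j-2-1 = j-3 from by ring] at this
    have sing3 : ∑ i ∈ Finset.Ioc (j-2) (j-1), ε i = ε (j-1) := by
      have := sumIoc_single ε (j-1); rwa [show j-1-1 = j-2 from by ring] at this
    have sing4 : ∑ i ∈ Finset.Ioc (j-1) j, ε i = ε j := by
      have := sumIoc_single ε j; rwa [show j-1 = j-1 from rfl] at this
    have cong1 : ∑ i ∈ Finset.Ioc (0:ℤ) (j-3), ε' i = ∑ i ∈ Finset.Ioc (0:ℤ) (j-3), ε i := by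
      refine Finset.sum_congr rfl fun i hi => ?_
      simp only [Finset.mem_Ioc] at hi
      exact P1 i (by omega) (by omega)
    have cong2 : ∑ i ∈ Finset.Ioc (j-2) ((d:ℤ)-2), ε' i = ∑ i ∈ Finset.Ioc j (d:ℤ), ε i := by
      have step : ∑ i ∈ Finset.Ioc (j-2) ((d:ℤ)-2), ε' i
          = ∑ i ∈ Finset.Ioc (j-2) ((d:ℤ)-2), ε (i+2) := by
        refine Finset.sum_congr rfl fun i hi => ?_
        simp only [Finset.mem_Ioc] at hi
        exact P3 i (by omega) (by omega)
      rw [step, sumIoc_shift ε (j-2) ((d:ℤ)-2), show j-2+2 = j from by ring,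
        show (d:ℤ)-2+2 = (d:ℤ) from by ring]
    rw [sing1, sing2, sing3, sing4, cong1, cong2, P2]
    ring
  -- sum of a'
  have hSa : ∑ i ∈ Finset.Icc (1:ℤ) ((d:ℤ)-2), a' i = ∑ i ∈ Finset.Icc (1:ℤ) (d:ℤ), a i := by
    rw [Icc1, Icc1]
    by_cases hjd : j = (d:ℤ)
    · -- case j = d
      rw [sumIoc_split a' (show (0:ℤ) ≤ 1 from by omega) (show (1:ℤ) ≤ (d:ℤ)-2 from by omega)]
      rw [sumIoc_split a (show (0:ℤ) ≤ 1 from by omega) (show (1:ℤ) ≤ (d:ℤ) from by omega),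
          sumIoc_split a (show (1:ℤ) ≤ (d:ℤ)-2 from by omega)
            (show (d:ℤ)-2 ≤ (d:ℤ) from by omega),
          sumIoc_split a (show ((d:ℤ)-2) ≤ (d:ℤ)-1 from by omega)
            (show (d:ℤ)-1 ≤ (d:ℤ) from by omega)]
      have sA : ∑ i ∈ Finset.Ioc (0:ℤ) 1, a' i = a ((d:ℤ)-1) + a 1 := by
        have := sumIoc_single a' 1
        rw [show (1:ℤ)-1 = 0 from by ring] at this
        rw [this, QK1 hjd]
      have sB : ∑ i ∈ Finset.Ioc (0:ℤ) 1, a i = a 1 := by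
        have := sumIoc_single a 1
        rwa [show (1:ℤ)-1 = 0 from by ring] at this
      have sC : ∑ i ∈ Finset.Ioc ((d:ℤ)-2) ((d:ℤ)-1), a i = a ((d:ℤ)-1) := by
        have := sumIoc_single a ((d:ℤ)-1)
        rwa [show (d:ℤ)-1-1 = (d:ℤ)-2 from by ring] at this
      have sD : ∑ i ∈ Finset.Ioc ((d:ℤ)-1) (d:ℤ), a i = 0 := by
        have := sumIoc_single a (d:ℤ)
        rw [show (d:ℤ)-1 = (d:ℤ)-1 from rfl] at this
        rw [this, show (d:ℤ) = j from by omega, haj]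
      have cong : ∑ i ∈ Finset.Ioc (1:ℤ) ((d:ℤ)-2), a' i
          = ∑ i ∈ Finset.Ioc (1:ℤ) ((d:ℤ)-2), a i := by
        refine Finset.sum_congr rfl fun i hi => ?_
        simp only [Finset.mem_Ioc] at hi
        rcases eq_or_lt_of_le hi.2 with heq | hlt
        · rw [heq, show (d:ℤ)-2 = j-2 from by omega]; exact Qj2
        · exact Qmid i (by omega) (by omega)
      rw [sA, sB, sC, sD, cong]; ring
    · -- case j ≤ d-1
      have hjd' : j ≤ (d:ℤ)-1 := by omega
      rw [sumIoc_split a' (show (0:ℤ) ≤ j-2 from by omega)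
            (show j-2 ≤ (d:ℤ)-2 from by omega),
          sumIoc_split a' (show (j-2 : ℤ) ≤ j-1 from by omega)
            (show j-1 ≤ (d:ℤ)-2 from by omega)]
      rw [sumIoc_split a (show (0:ℤ) ≤ j+1 from by omega) (show j+1 ≤ (d:ℤ) from by omega),
          sumIoc_split a (show (0:ℤ) ≤ j from by omega) (show j ≤ j+1 from by omega),
          sumIoc_split a (show (0:ℤ) ≤ j-1 from by omega) (show j-1 ≤ j from by omega),
          sumIoc_split a (show (0:ℤ) ≤ j-2 from by omega) (show j-2 ≤ j-1 from by omega)]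
      have sA : ∑ i ∈ Finset.Ioc (j-2) (j-1), a' i = a (j-1) + a (j+1) := by
        have := sumIoc_single a' (j-1)
        rw [show j-1-1 = j-2 from by ring] at this
        rw [this, QK2 hjd']
      have sB : ∑ i ∈ Finset.Ioc (j-2) (j-1), a i = a (j-1) := by
        have := sumIoc_single a (j-1)
        rwa [show j-1-1 = j-2 from by ring] at this
      have sC : ∑ i ∈ Finset.Ioc (j-1) j, a i = 0 := by
        have := sumIoc_single a j
        rw [this, haj]
      have sD : ∑ i ∈ Finset.Ioc j (j+1), a i = a (j+1) := by
        have := sumIoc_single a (j+1)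
        rwa [show j+1-1 = j from by ring] at this
      have cong1 : ∑ i ∈ Finset.Ioc (0:ℤ) (j-2), a' i
          = ∑ i ∈ Finset.Ioc (0:ℤ) (j-2), a i := by
        refine Finset.sum_congr rfl fun i hi => ?_
        simp only [Finset.mem_Ioc] at hi
        rcases eq_or_lt_of_le hi.2 with heq | hlt
        · rw [heq]; exact Qj2
        · by_cases hi1 : i = 1
          · rw [hi1]; exact Q1 hjd' (by omega)
          · exact Qmid i (by omega) (by omega)
      have cong2 : ∑ i ∈ Finset.Ioc (j-1) ((d:ℤ)-2), a' i
          = ∑ i ∈ Finset.Ioc (j+1) (d:ℤ), a i := by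
        have step : ∑ i ∈ Finset.Ioc (j-1) ((d:ℤ)-2), a' i
            = ∑ i ∈ Finset.Ioc (j-1) ((d:ℤ)-2), a (i+2) := by
          refine Finset.sum_congr rfl fun i hi => ?_
          simp only [Finset.mem_Ioc] at hi
          exact Qhigh i (by omega) (by omega)
        rw [step, sumIoc_shift a (j-1) ((d:ℤ)-2), show j-1+2 = j+1 from by ring,
          show (d:ℤ)-2+2 = (d:ℤ) from by ring]
      rw [sA, sB, sC, sD, cong1, cong2]; ring
  refine ⟨?_, ?_, ?_, ?_⟩
  · rw [hSa, hSe]; ring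
  · rintro ⟨h2, h1, h0⟩; rw [h2, h1, h0]; norm_num
  · rintro ⟨h2, h1, h0⟩; rw [h2, h1, h0]; norm_num
  · intro hn1 hn2
    rcases hu (j-2) with h2 | h2 <;> rcases hu (j-1) with h1 | h1 <;> rcases hu j with h0 | h0 <;>
      first
        | exact absurd (And.intro h2 (And.intro h1 h0)) hn1
        | exact absurd (And.intro h2 (And.intro h1 h0)) hn2
        | (norm_num [h2, h1, h0])
end

section
/- Let v_1,…,v_d be a unimodular sequence in ℤ² with a_j = ±1, and let v'_1,…,v'_{d-1} be the unimodular sequence obtained by deleting v_j, with corresponding ε'_i and a'_i. Then ε'_{j-1} = −ε_{j-1}ε_j a_j, a'_{j-1} = a_{j-1} − a_j, and a'_j = a_{j+1} − a_j (while ε'_i = ε_i for i ≤ j−2, ε'_i = ε_{i+1} for i ≥ j, a'_i = a_i for i ≤ j−2, a'_i = a_{i+1} for i ≥ j+1). -/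
private lemma cancel_aux {c e A B q1 q2 : ℤ} (h1 : c * q1 = 0) (h2 : c * q2 = 0)
    (hd : e = A * q1 + B * q2) (hs : e * e = 1) : c = 0 := by
  have hce : c * e = 0 := by linear_combination A * h1 + B * h2 + c * hd
  linear_combination e * hce - c * hs

/-- with `a_j = ±1`, deleting `v_j` from a unimodular sequence
`v_1, …, v_d` (indexed cyclically, encoded here as `d`-periodic functions on `ℤ`)
yields a unimodular sequence `v'_1, …, v'_{d-1}` with
`ε'_{j-1} = −ε_{j-1}ε_j a_j`, `a'_{j-1} = a_{j-1} − a_j`, `a'_j = a_{j+1} − a_j`,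
`ε'_i = ε_i` for `i ≤ j−2`, `ε'_i = ε_{i+1}` for `i ≥ j`, `a'_i = a_i` for
`i ≤ j−2`, and `a'_i = a_{i+1}` for `i ≥ j+1`. -/
theorem stmt6 (d : ℕ) (hd : 3 ≤ d) (j : ℤ) (hj1 : 2 ≤ j) (hj2 : j ≤ (d : ℤ) - 1)
    (v : ℤ → ℤ × ℤ) (hvper : ∀ i, v (i + d) = v i)
    (ε a : ℤ → ℤ)
    (hε : ∀ i, ε i = det (v i) (v (i + 1)))
    (hu : ∀ i, ε i = 1 ∨ ε i = -1)
    (ha : ∀ i, ε (i - 1) • v (i - 1) + ε i • v (i + 1) + a i • v i = 0)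
    (haj : a j = 1 ∨ a j = -1)
    (v' : ℤ → ℤ × ℤ) (hv'per : ∀ i, v' (i + ((d : ℤ) - 1)) = v' i)
    (hv'1 : ∀ i, 1 ≤ i → i ≤ j - 1 → v' i = v i)
    (hv'2 : ∀ i, j ≤ i → i ≤ (d : ℤ) - 1 → v' i = v (i + 1))
    (ε' a' : ℤ → ℤ)
    (hε' : ∀ i, ε' i = det (v' i) (v' (i + 1)))
    (ha' : ∀ i, ε' (i - 1) • v' (i - 1) + ε' i • v' (i + 1) + a' i • v' i = 0) :
    ε' (j - 1) = -(ε (j - 1) * ε j * a j) ∧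
    a' (j - 1) = a (j - 1) - a j ∧
    a' j = a (j + 1) - a j ∧
    (∀ i, 1 ≤ i → i ≤ j - 2 → ε' i = ε i) ∧
    (∀ i, j ≤ i → i ≤ (d : ℤ) - 1 → ε' i = ε (i + 1)) ∧
    (∀ i, 1 ≤ i → i ≤ j - 2 → a' i = a i) ∧
    (∀ i, j + 1 ≤ i → i ≤ (d : ℤ) - 1 → a' i = a (i + 1)) := by
  have hd3 : (3 : ℤ) ≤ (d : ℤ) := by exact_mod_cast hd
  -- extended substitution facts
  have hv'A : ∀ i, 0 ≤ i → i ≤ j - 1 → v' i = v i := by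
    intro i h0 h1
    rcases eq_or_lt_of_le h0 with h | h
    · subst h
      have p1 := hv'per 0
      rw [zero_add] at p1
      have p2 : v' ((d : ℤ) - 1) = v ((d : ℤ) - 1 + 1) := hv'2 _ hj2 le_rfl
      have p3 : v (0 + (d : ℤ)) = v 0 := hvper 0
      rw [zero_add] at p3
      rw [← p1, p2, show (d : ℤ) - 1 + 1 = (d : ℤ) from by ring, p3]
    · exact hv'1 i (by linarith) h1
  have hv'B : ∀ i, j ≤ i → i ≤ (d : ℤ) → v' i = v (i + 1) := by
    intro i h0 h1
    rcases eq_or_lt_of_le h1 with h | h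
    · subst h
      have p1 := hv'per 1
      rw [show (1 : ℤ) + ((d : ℤ) - 1) = (d : ℤ) from by ring] at p1
      have p2 : v' (1 : ℤ) = v 1 := hv'1 1 le_rfl (by linarith)
      have p3 : v (1 + (d : ℤ)) = v 1 := hvper 1
      rw [p1, p2, ← p3, show (1 : ℤ) + (d : ℤ) = (d : ℤ) + 1 from by ring]
    · exact hv'2 i h0 (by linarith)
  -- component forms
  have hC : ∀ i,
      (ε (i - 1) * (v (i - 1)).1 + ε i * (v (i + 1)).1 + a i * (v i).1 = 0) ∧
      (ε (i - 1) * (v (i - 1)).2 + ε i * (v (i + 1)).2 + a i * (v i).2 = 0) := by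
    intro i
    have h := ha i
    rw [Prod.ext_iff] at h
    simpa using h
  have hC' : ∀ i,
      (ε' (i - 1) * (v' (i - 1)).1 + ε' i * (v' (i + 1)).1 + a' i * (v' i).1 = 0) ∧
      (ε' (i - 1) * (v' (i - 1)).2 + ε' i * (v' (i + 1)).2 + a' i * (v' i).2 = 0) := by
    intro i
    have h := ha' i
    rw [Prod.ext_iff] at h
    simpa using h
  have hsq : ∀ i, ε i * ε i = 1 := by
    intro i; rcases hu i with h | h <;> rw [h] <;> norm_num
  have haj2 : a j * a j = 1 := by rcases haj with h | h <;> rw [h] <;> norm_num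
  have hD : ∀ i, ε i = (v i).1 * (v (i + 1)).2 - (v i).2 * (v (i + 1)).1 := by
    intro i; rw [hε i]; rfl
  -- epsilon facts
  have Geps1 : ∀ i, 0 ≤ i → i ≤ j - 2 → ε' i = ε i := by
    intro i h0 h1
    rw [hε' i, hv'A i h0 (by linarith), hv'A (i + 1) (by linarith) (by linarith), ← hε i]
  have Geps2 : ∀ i, j ≤ i → i ≤ (d : ℤ) - 1 → ε' i = ε (i + 1) := by
    intro i h0 h1
    rw [hε' i, hv'B i h0 (by linarith), hv'B (i + 1) (by linarith) (by linarith)]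
    exact (hε (i + 1)).symm
  -- the new epsilon at j - 1
  have Geps : ε' (j - 1) = -(ε (j - 1) * ε j * a j) := by
    have h1 : v' (j - 1) = v (j - 1) := hv'A _ (by linarith) le_rfl
    have h2 : v' (j - 1 + 1) = v (j + 1) := by
      rw [show j - 1 + 1 = j from by ring]
      exact hv'B j le_rfl (by linarith)
    obtain ⟨hx, hy⟩ := hC j
    have hdj1 := hD (j - 1)
    rw [show j - 1 + 1 = j from by ring] at hdj1
    rw [hε' (j - 1), h1, h2]
    show (v (j - 1)).1 * (v (j + 1)).2 - (v (j - 1)).2 * (v (j + 1)).1 = _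
    linear_combination (-(ε j * (v (j - 1)).2)) * hx + (ε j * (v (j - 1)).1) * hy +
      (ε j * a j) * hdj1 -
      ((v (j - 1)).1 * (v (j + 1)).2 - (v (j - 1)).2 * (v (j + 1)).1) * hsq j
  -- a' at j - 1
  have Ga1 : a' (j - 1) = a (j - 1) - a j := by
    obtain ⟨hx', hy'⟩ := hC' (j - 1)
    rw [show j - 1 - 1 = j - 2 from by ring, show j - 1 + 1 = j from by ring,
      Geps1 (j - 2) (by linarith) le_rfl, Geps,
      hv'A (j - 2) (by linarith) (by linarith), hv'A (j - 1) (by linarith) le_rfl,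
      hv'B j le_rfl (by linarith)] at hx' hy'
    obtain ⟨hxq, hyq⟩ := hC (j - 1)
    rw [show j - 1 - 1 = j - 2 from by ring, show j - 1 + 1 = j from by ring] at hxq hyq
    obtain ⟨hxj, hyj⟩ := hC j
    have hX : (v (j + 1)).1 = -(ε j * ε (j - 1)) * (v (j - 1)).1 - (ε j * a j) * (v j).1 := by
      linear_combination (ε j) * hxj - (v (j + 1)).1 * hsq j
    have hY : (v (j + 1)).2 = -(ε j * ε (j - 1)) * (v (j - 1)).2 - (ε j * a j) * (v j).2 := by
      linear_combination (ε j) * hyj - (v (j + 1)).2 * hsq j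
    have c1 : (a' (j - 1) - (a (j - 1) - a j)) * (v (j - 1)).1 = 0 := by
      linear_combination hx' - hxq + (ε (j - 1) * ε j * a j) * hX -
        (a j * (v (j - 1)).1 * (ε j * ε j)) * hsq (j - 1) -
        (a j * (v (j - 1)).1 + ε (j - 1) * (v j).1) * hsq j -
        (ε (j - 1) * (v j).1 * (ε j * ε j)) * haj2
    have c2 : (a' (j - 1) - (a (j - 1) - a j)) * (v (j - 1)).2 = 0 := by
      linear_combination hy' - hyq + (ε (j - 1) * ε j * a j) * hY -
        (a j * (v (j - 1)).2 * (ε j * ε j)) * hsq (j - 1) -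
        (a j * (v (j - 1)).2 + ε (j - 1) * (v j).2) * hsq j -
        (ε (j - 1) * (v j).2 * (ε j * ε j)) * haj2
    have hdj1 := hD (j - 1)
    rw [show j - 1 + 1 = j from by ring] at hdj1
    have hdd : ε (j - 1) = (v j).2 * (v (j - 1)).1 + (-(v j).1) * (v (j - 1)).2 := by
      linear_combination hdj1
    have := cancel_aux c1 c2 hdd (hsq (j - 1))
    linarith
  -- a' at j
  have Ga2 : a' j = a (j + 1) - a j := by
    obtain ⟨hx', hy'⟩ := hC' j
    rw [Geps, Geps2 j le_rfl hj2,
      hv'A (j - 1) (by linarith) le_rfl, hv'B j le_rfl (by linarith),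
      hv'B (j + 1) (by linarith) (by linarith)] at hx' hy'
    obtain ⟨hxn, hyn⟩ := hC (j + 1)
    rw [show j + 1 - 1 = j from by ring] at hxn hyn
    obtain ⟨hxj, hyj⟩ := hC j
    have hX : (v (j - 1)).1 = -(ε (j - 1) * ε j) * (v (j + 1)).1 - (ε (j - 1) * a j) * (v j).1 := by
      linear_combination (ε (j - 1)) * hxj - (v (j - 1)).1 * hsq (j - 1)
    have hY : (v (j - 1)).2 = -(ε (j - 1) * ε j) * (v (j + 1)).2 - (ε (j - 1) * a j) * (v j).2 := by
      linear_combination (ε (j - 1)) * hyj - (v (j - 1)).2 * hsq (j - 1)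
    have c1 : (a' j - (a (j + 1) - a j)) * (v (j + 1)).1 = 0 := by
      linear_combination hx' - hxn + (ε (j - 1) * ε j * a j) * hX -
        (a j * (v (j + 1)).1 * (ε (j - 1) * ε (j - 1))) * hsq j -
        (a j * (v (j + 1)).1 + ε j * (v j).1) * hsq (j - 1) -
        (ε j * (v j).1 * (ε (j - 1) * ε (j - 1))) * haj2
    have c2 : (a' j - (a (j + 1) - a j)) * (v (j + 1)).2 = 0 := by
      linear_combination hy' - hyn + (ε (j - 1) * ε j * a j) * hY -
        (a j * (v (j + 1)).2 * (ε (j - 1) * ε (j - 1))) * hsq j -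
        (a j * (v (j + 1)).2 + ε j * (v j).2) * hsq (j - 1) -
        (ε j * (v j).2 * (ε (j - 1) * ε (j - 1))) * haj2
    have hdd : ε j = (-(v j).2) * (v (j + 1)).1 + (v j).1 * (v (j + 1)).2 := by
      linear_combination hD j
    have := cancel_aux c1 c2 hdd (hsq j)
    linarith
  -- a' below j - 1
  have Ga3 : ∀ i, 1 ≤ i → i ≤ j - 2 → a' i = a i := by
    intro i h0 h1
    obtain ⟨hx', hy'⟩ := hC' i
    rw [Geps1 (i - 1) (by linarith) (by linarith), Geps1 i (by linarith) h1,
      hv'A (i - 1) (by linarith) (by linarith), hv'A i (by linarith) (by linarith),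
      hv'A (i + 1) (by linarith) (by linarith)] at hx' hy'
    obtain ⟨hx, hy⟩ := hC i
    have c1 : (a' i - a i) * (v i).1 = 0 := by linear_combination hx' - hx
    have c2 : (a' i - a i) * (v i).2 = 0 := by linear_combination hy' - hy
    have hdd : ε i = (v (i + 1)).2 * (v i).1 + (-(v (i + 1)).1) * (v i).2 := by
      linear_combination hD i
    have := cancel_aux c1 c2 hdd (hsq i)
    linarith
  -- a' above j
  have Ga4 : ∀ i, j + 1 ≤ i → i ≤ (d : ℤ) - 1 → a' i = a (i + 1) := by
    intro i h0 h1
    obtain ⟨hx', hy'⟩ := hC' i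
    have e1 : ε' (i - 1) = ε i := by
      have := Geps2 (i - 1) (by linarith) (by linarith)
      rwa [show i - 1 + 1 = i from by ring] at this
    have w1 : v' (i - 1) = v i := by
      have := hv'B (i - 1) (by linarith) (by linarith)
      rwa [show i - 1 + 1 = i from by ring] at this
    rw [e1, Geps2 i (by linarith) h1, w1, hv'B i (by linarith) (by linarith),
      hv'B (i + 1) (by linarith) (by linarith)] at hx' hy'
    obtain ⟨hxn, hyn⟩ := hC (i + 1)
    rw [show i + 1 - 1 = i from by ring] at hxn hyn
    have c1 : (a' i - a (i + 1)) * (v (i + 1)).1 = 0 := by linear_combination hx' - hxn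
    have c2 : (a' i - a (i + 1)) * (v (i + 1)).2 = 0 := by linear_combination hy' - hyn
    have hdd : ε i = (-(v i).2) * (v (i + 1)).1 + (v i).1 * (v (i + 1)).2 := by
      linear_combination hD i
    have := cancel_aux c1 c2 hdd (hsq i)
    linarith
  exact ⟨Geps, Ga1, Ga2, fun i h1 h2 => Geps1 i (by linarith) h2, Geps2, Ga3, Ga4⟩
end

section
/- Let v_1,…,v_d be a unimodular sequence in ℤ² with ε_i = det(v_i,v_{i+1}) and a_i defined by ε_{i-1}v_{i-1} + ε_i v_{i+1} + a_i v_i = 0. Define w_i = ε_{i-1}(v_i − v_{i-1}). Then det(w_i, w_{i+1}) = ε_{i-1} + a_i + ε_i. -/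
/-- with `w_i = ε_{i-1}(v_i − v_{i-1})`, one has
`det(w_i, w_{i+1}) = ε_{i-1} + a_i + ε_i`. -/
theorem stmt10 (d : ℕ) (hd : 2 ≤ d) [NeZero d] (v : ZMod d → ℤ × ℤ)
    (hu : ∀ i, det (v i) (v (i + 1)) = 1 ∨ det (v i) (v (i + 1)) = -1)
    (a : ZMod d → ℤ)
    (ha : ∀ i, det (v (i - 1)) (v i) • v (i - 1) + det (v i) (v (i + 1)) • v (i + 1)
            + a i • v i = 0)
    (w : ZMod d → ℤ × ℤ)
    (hw : ∀ i, w i = det (v (i - 1)) (v i) • (v i - v (i - 1)))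
    (i : ZMod d) :
    det (w i) (w (i + 1))
      = det (v (i - 1)) (v i) + a i + det (v i) (v (i + 1)) := by
  have h0 : det (v (i - 1)) (v i) = 1 ∨ det (v (i - 1)) (v i) = -1 := by
    have := hu (i - 1); rwa [sub_add_cancel] at this
  have h1 := hu i
  have h0sq : det (v (i - 1)) (v i) ^ 2 = 1 := by rcases h0 with h | h <;> rw [h] <;> ring
  have h1sq : det (v i) (v (i + 1)) ^ 2 = 1 := by rcases h1 with h | h <;> rw [h] <;> ring
  have hai := ha i
  have e1 : det (v (i - 1)) (v i) * (v (i - 1)).1 + det (v i) (v (i + 1)) * (v (i + 1)).1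
      + a i * (v i).1 = 0 := congrArg Prod.fst hai
  have e2 : det (v (i - 1)) (v i) * (v (i - 1)).2 + det (v i) (v (i + 1)) * (v (i + 1)).2
      + a i * (v i).2 = 0 := congrArg Prod.snd hai
  have hwi := hw i
  have hwi1 := hw (i + 1)
  rw [add_sub_cancel_right] at hwi1
  rw [hwi, hwi1]
  simp only [det] at *
  simp only [Prod.smul_fst, Prod.smul_snd, Prod.fst_sub, Prod.snd_sub, smul_eq_mul]
  linear_combination ((v (i - 1)).1 * (v i).2 - (v (i - 1)).2 * (v i).1) * h1sq
    + ((v i).1 * (v (i + 1)).2 - (v i).2 * (v (i + 1)).1 + a i) * h0sq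
    + ((v (i - 1)).1 * (v i).2 - (v (i - 1)).2 * (v i).1) *
        ((v (i - 1)).2 * e1 - (v (i - 1)).1 * e2)
end

section
/- Let P be a left-turning lattice multi-polygon with all signs +, i.e., for every triple of consecutive points u, v, w not on a common line one has det(v − u, w − u) > 0, and ε = + on every side. Then B(P) ≥ 2C(P) + 1 and C(P) ≥ 1. -/
open MeasureTheory

/-- The dot product of two vectors in `ℤ²`. -/
def dot (p q : ℤ × ℤ) : ℤ := p.1 * q.1 + p.2 * q.2

/-- A lattice point regarded as a complex number. -/
noncomputable def toC (p : ℤ × ℤ) : ℂ := ⟨(p.1 : ℝ), (p.2 : ℝ)⟩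

/-- A lattice multi-polygon: a closed piecewise-linear loop `v` with vertices in
`ℤ²` and nondegenerate sides, together with a sign `ε i ∈ {±1}` on each side
`v_i v_{i+1}`, subject to the condition (⋆): whenever `v_{i-1}, v_i, v_{i+1}` are
collinear, the signs of the two adjacent sides agree if `v_i` lies between
`v_{i-1}` and `v_{i+1}` (the two side directions have positive dot product), and
differ if the loop reverses at `v_i` (negative dot product), i.e. if `v_{i-1}`
lies on `v_i v_{i+1}` or `v_{i+1}` lies on `v_{i-1} v_i`. -/
def IsMultiPolygon {d : ℕ} (v : ZMod d → ℤ × ℤ) (ε : ZMod d → ℤ) : Prop :=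
  (∀ i, ε i = 1 ∨ ε i = -1) ∧
  (∀ i, v i ≠ v (i + 1)) ∧
  (∀ i, det (v i - v (i - 1)) (v (i + 1) - v i) = 0 →
    (0 < dot (v i - v (i - 1)) (v (i + 1) - v i) → ε (i - 1) = ε i) ∧
    (dot (v i - v (i - 1)) (v (i + 1) - v i) < 0 → ε (i - 1) ≠ ε i))

/-- The winding number `d_P(x)` of the loop `v_1 → … → v_d → v_1` around a point
`x` of the plane (valid off the loop). -/
noncomputable def windingAt {d : ℕ} [NeZero d] (v : ZMod d → ℤ × ℤ) (x : ℂ) : ℝ :=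
  (2 * Real.pi)⁻¹ * ∑ i : ZMod d, Complex.arg ((toC (v (i + 1)) - x) / (toC (v i) - x))

/-- `A(P)`: the integral over the plane of the winding number of the loop. -/
noncomputable def polyA {d : ℕ} [NeZero d] (v : ZMod d → ℤ × ℤ) : ℝ :=
  ∫ x : ℂ, windingAt v x

/-- `B(P) = Σ ε_i |v_i v_{i+1}|`, where `|v_i v_{i+1}|` is the number of lattice
points on the side `v_i v_{i+1}` minus one, i.e. the gcd of the coordinate
differences. -/
def polyB {d : ℕ} [NeZero d] (v : ZMod d → ℤ × ℤ) (ε : ZMod d → ℤ) : ℤ :=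
  ∑ i : ZMod d, ε i * (Int.gcd ((v (i + 1)).1 - (v i).1) ((v (i + 1)).2 - (v i).2) : ℤ)

/-- The normal vector `n_i` to the side `v_i v_{i+1}`: the 90° (counterclockwise)
rotation of `ε_i n_i` points along `v_{i+1} − v_i`, so
`n_i = −i · ε_i · (v_{i+1} − v_i)` as a complex number. -/
noncomputable def normalVec {d : ℕ} (v : ZMod d → ℤ × ℤ) (ε : ZMod d → ℤ) (i : ZMod d) : ℂ :=
  -Complex.I * (ε i : ℂ) * (toC (v (i + 1)) - toC (v i))

/-- `C(P)`: the rotation number of the sequence of normal vectors `n_1, …, n_d`. -/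
noncomputable def polyC {d : ℕ} [NeZero d] (v : ZMod d → ℤ × ℤ) (ε : ZMod d → ℤ) : ℝ :=
  (2 * Real.pi)⁻¹ *
    ∑ i : ZMod d, Complex.arg (normalVec v ε (i + 1) / normalVec v ε i)

/-!
The turning angle `θᵢ = arg (eᵢ₊₁ / eᵢ)` between consecutive sides `eᵢ = vᵢ₊₁ - vᵢ` equals
the angle between consecutive normals, so `2π C(P) = Σ θᵢ`. The `θᵢ` add up to a multiple of
`2π`, since the ratios `eᵢ₊₁ / eᵢ` telescope to `1`. Left-turning gives `θᵢ ≥ 0`, and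
condition (⋆) excludes the reversal `θᵢ = π`, so `0 ≤ θᵢ < π`. The sum is positive because
sides all pointing in one direction cannot add up to `0`, hence `C(P) ≥ 1`; and
`2π C(P) < dπ` gives `2 C(P) + 1 ≤ d ≤ B(P)`.
-/

open Complex

noncomputable def turningNumber {d : ℕ} [NeZero d] (z : ZMod d → ℂ) : ℝ :=
  (2 * Real.pi)⁻¹ * ∑ i, arg (z (i + 1) / z i)

theorem Complex.arg_prod_coe_angle {ι : Type*} (s : Finset ι) (f : ι → ℂ)
    (hf : ∀ i ∈ s, f i ≠ 0) :
    ((∏ i ∈ s, f i).arg : Real.Angle) = ∑ i ∈ s, ((f i).arg : Real.Angle) := by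
  induction s using Finset.cons_induction with
  | empty => simp
  | cons a s _ ih =>
    have hs : ∀ i ∈ s, f i ≠ 0 := fun i hi => hf i (Finset.mem_cons_of_mem hi)
    rw [Finset.prod_cons, Finset.sum_cons,
      arg_mul_coe_angle (hf a (Finset.mem_cons_self a s)) (Finset.prod_ne_zero_iff.mpr hs), ih hs]

section Cyclic

variable {d : ℕ} [NeZero d]

theorem ZMod.sum_sub_shift {M : Type*} [AddCommGroup M] (f : ZMod d → M) :
    ∑ i, (f (i + 1) - f i) = 0 := by
  rw [Finset.sum_sub_distrib,
    Fintype.sum_equiv (Equiv.addRight 1) (fun i => f (i + 1)) f fun _ => rfl, sub_self]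

theorem ZMod.prod_div_shift {G : Type*} [CommGroupWithZero G] (f : ZMod d → G)
    (hf : ∀ i, f i ≠ 0) : ∏ i, f (i + 1) / f i = 1 := by
  rw [Finset.prod_div_distrib,
    Fintype.prod_equiv (Equiv.addRight 1) (fun i => f (i + 1)) f fun _ => rfl,
    div_self (Finset.prod_ne_zero_iff.mpr fun i _ => hf i)]

theorem ZMod.forall_of_succ {P : ZMod d → Prop} (h0 : P 0) (hsucc : ∀ i, P i → P (i + 1))
    (i : ZMod d) : P i := by
  have hnat : ∀ n : ℕ, P n := by
    intro n
    induction n with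
    | zero => simpa using h0
    | succ n ih => simpa using hsucc _ ih
  simpa using hnat i.val

variable {z : ZMod d → ℂ}

theorem exists_sum_arg_div_eq_two_pi_mul_int (hz : ∀ i, z i ≠ 0) :
    ∃ k : ℤ, ∑ i, arg (z (i + 1) / z i) = 2 * Real.pi * k := by
  have hangle : ((∑ i, arg (z (i + 1) / z i) : ℝ) : Real.Angle) = ((0 : ℝ) : Real.Angle) := by
    rw [← Real.Angle.coe_coeHom, map_sum, Real.Angle.coe_coeHom,
      ← arg_prod_coe_angle _ _ fun i _ => div_ne_zero (hz _) (hz i),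
      ZMod.prod_div_shift z hz, arg_one]
  simpa using Real.Angle.angle_eq_iff_two_pi_dvd_sub.mp hangle

theorem exists_arg_div_ne_zero_of_sum_eq_zero (hz : ∀ i, z i ≠ 0) (hsum : ∑ i, z i = 0) :
    ∃ i, arg (z (i + 1) / z i) ≠ 0 := by
  by_contra! harg
  have hray : ∀ i, SameRay ℝ (z i) (z 0) :=
    ZMod.forall_of_succ (SameRay.refl _) fun i hi =>
      (sameRay_iff_arg_div_eq_zero.mpr (harg i)).trans hi fun h => absurd h (hz i)
  choose r hr hrz using fun i => (hray i).exists_pos_right (hz i) (hz 0)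
  have hrsum : 0 < ∑ i, r i := Finset.sum_pos (fun i _ => hr i) Finset.univ_nonempty
  have : ∑ i, z i = (∑ i, r i) • z 0 := by
    rw [Finset.sum_smul]
    exact Finset.sum_congr rfl fun i _ => hrz i
  exact smul_ne_zero hrsum.ne' (hz 0) (this ▸ hsum)

theorem exists_int_turningNumber_eq_of_arg_div_mem_Ico (hz : ∀ i, z i ≠ 0)
    (hsum : ∑ i, z i = 0) (harg : ∀ i, arg (z (i + 1) / z i) ∈ Set.Ico 0 Real.pi) :
    ∃ k : ℤ, turningNumber z = k ∧ 1 ≤ k ∧ 2 * k + 1 ≤ d := by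
  obtain ⟨k, hk⟩ := exists_sum_arg_div_eq_two_pi_mul_int hz
  have hπ := Real.pi_pos
  have hpos : 0 < ∑ i, arg (z (i + 1) / z i) := by
    obtain ⟨j, hj⟩ := exists_arg_div_ne_zero_of_sum_eq_zero hz hsum
    exact Finset.sum_pos' (fun i _ => (harg i).1)
      ⟨j, Finset.mem_univ j, (harg j).1.lt_of_ne' hj⟩
  have hlt : ∑ i, arg (z (i + 1) / z i) < d * Real.pi := by
    calc ∑ i, arg (z (i + 1) / z i) < ∑ _i : ZMod d, Real.pi :=
          Finset.sum_lt_sum_of_nonempty Finset.univ_nonempty fun i _ => (harg i).2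
      _ = d * Real.pi := by simp [ZMod.card]
  have hk1 : (0 : ℝ) < k := by nlinarith
  have hkd : (2 * k : ℝ) < d := by nlinarith
  refine ⟨k, ?_, by exact_mod_cast hk1, ?_⟩
  · rw [turningNumber, hk]
    field_simp
  · have : 2 * k < (d : ℤ) := by exact_mod_cast hkd
    omega

end Cyclic

theorem toC_sub (p q : ℤ × ℤ) : toC (p - q) = toC p - toC q := by
  apply Complex.ext <;> simp [toC]

theorem toC_ne_zero {p : ℤ × ℤ} (hp : p ≠ 0) : toC p ≠ 0 := by
  contrapose! hp
  have h1 := congrArg re hp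
  have h2 := congrArg im hp
  simp only [toC, zero_re, zero_im, Int.cast_eq_zero] at h1 h2
  exact Prod.ext h1 h2

theorem im_toC_div (p q : ℤ × ℤ) : (toC q / toC p).im = det p q / normSq (toC p) := by
  rw [div_im]
  simp only [toC, det, normSq_apply]
  push_cast
  ring

theorem re_toC_div (p q : ℤ × ℤ) : (toC q / toC p).re = dot p q / normSq (toC p) := by
  rw [div_re]
  simp only [toC, dot, normSq_apply]
  push_cast
  ring

theorem arg_toC_div_mem_Ico {p q : ℤ × ℤ} (hdet : 0 ≤ det p q)
    (hdot : det p q = 0 → 0 ≤ dot p q) : arg (toC q / toC p) ∈ Set.Ico 0 Real.pi := by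
  refine ⟨arg_nonneg_iff.mpr ?_, arg_lt_pi_iff.mpr ?_⟩
  · rw [im_toC_div]
    exact div_nonneg (by exact_mod_cast hdet) (normSq_nonneg _)
  · rw [im_toC_div, re_toC_div, or_iff_not_imp_right, not_not, div_eq_zero_iff]
    rintro (h | h)
    · exact div_nonneg (by exact_mod_cast hdot (by exact_mod_cast h)) (normSq_nonneg _)
    · simp [h]

section Polygon

variable {d : ℕ} (v : ZMod d → ℤ × ℤ)

theorem polyC_one_eq_turningNumber [NeZero d] :
    polyC v (fun _ => 1) = turningNumber fun i => toC (v (i + 1)) - toC (v i) := by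
  have hI : -I ≠ 0 := neg_ne_zero.mpr I_ne_zero
  simp only [polyC, turningNumber, normalVec, Int.cast_one, mul_one, mul_div_mul_left _ _ hI]

theorem card_le_polyB_one [NeZero d] (hv : ∀ i, v i ≠ v (i + 1)) :
    (d : ℤ) ≤ polyB v (fun _ => 1) := by
  calc (d : ℤ) = ∑ _i : ZMod d, 1 := by simp [ZMod.card]
    _ ≤ polyB v (fun _ => 1) := Finset.sum_le_sum fun i _ => by
        have : Int.gcd ((v (i + 1)).1 - (v i).1) ((v (i + 1)).2 - (v i).2) ≠ 0 := by
          rw [Ne, Int.gcd_eq_zero_iff, sub_eq_zero, sub_eq_zero]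
          exact fun h => hv i (Prod.ext h.1.symm h.2.symm)
        simpa using Nat.one_le_iff_ne_zero.mpr this

theorem arg_side_div_mem_Ico (hmp : IsMultiPolygon v (fun _ => 1))
    (hleft : ∀ i, det (v i - v (i - 1)) (v (i + 1) - v (i - 1)) ≠ 0 →
      0 < det (v i - v (i - 1)) (v (i + 1) - v (i - 1))) (i : ZMod d) :
    arg (toC (v (i + 1 + 1) - v (i + 1)) / toC (v (i + 1) - v i)) ∈ Set.Ico 0 Real.pi := by
  have hdet : det (v (i + 1) - v i) (v (i + 1 + 1) - v i) =
      det (v (i + 1) - v i) (v (i + 1 + 1) - v (i + 1)) := by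
    simp only [det, Prod.fst_sub, Prod.snd_sub]
    ring
  have hturn := hleft (i + 1)
  have hstar := hmp.2.2 (i + 1)
  simp only [add_sub_cancel_right, hdet] at hturn hstar
  refine arg_toC_div_mem_Ico (not_lt.mp fun h => (hturn h.ne).not_gt h) fun h0 => ?_
  exact not_lt.mp fun h => (hstar h0).2 h rfl

end Polygon

/-- for a left-turning lattice multi-polygon `P` with all signs
`+` (every triple of consecutive points `u, v, w` not on a common line satisfies
`det(v − u, w − u) > 0`), one has `B(P) ≥ 2C(P) + 1` and `C(P) ≥ 1`. -/
theorem stmt18 (d : ℕ) [NeZero d] (v : ZMod d → ℤ × ℤ)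
    (hmp : IsMultiPolygon v (fun _ => 1))
    (hleft : ∀ i, det (v i - v (i - 1)) (v (i + 1) - v (i - 1)) ≠ 0 →
      0 < det (v i - v (i - 1)) (v (i + 1) - v (i - 1))) :
    2 * polyC v (fun _ => 1) + 1 ≤ (polyB v (fun _ => 1) : ℝ) ∧
    1 ≤ polyC v (fun _ => 1) := by
  have hside : ∀ i, toC (v (i + 1)) - toC (v i) ≠ 0 := fun i => by
    rw [← toC_sub]
    exact toC_ne_zero (sub_ne_zero.mpr (hmp.2.1 i).symm)
  obtain ⟨k, hCk, hk1, hkd⟩ := exists_int_turningNumber_eq_of_arg_div_mem_Ico hside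
    (ZMod.sum_sub_shift (toC ∘ v)) fun i => by
      simpa only [← toC_sub] using arg_side_div_mem_Ico v hmp hleft i
  have hB : (d : ℝ) ≤ polyB v (fun _ => 1) := by exact_mod_cast card_le_polyB_one v hmp.2.1
  rw [polyC_one_eq_turningNumber, hCk]
  exact ⟨le_trans (by exact_mod_cast hkd) hB, by exact_mod_cast hk1⟩
end
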